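/- arXiv:2310.07809 — 6 statements merged into one kernel-verified Lean document; each statement's English description precedes it below -/
import Mathlib

section
/- Let P and Q be joint probability distributions on a finite product space 𝒳 × 𝒴 with the same support on 𝒳. For every q ∈ (0,1], the probability under the Q-marginal Q_X that d_TV(P_{Y|X=x}, Q_{Y|X=x}) > 2·d_TV(P,Q)/q is at most q. -/
open Finset
open scoped Classical

/-- The `X`-marginal of a joint mass function on `X × Y`. -/
noncomputable def margX {X Y : Type*} [Fintype Y] (P : X × Y → ℝ) : X → ℝ :=
  fun x => ∑ y, P (x, y)

/-- The conditional mass function of `Y` given `X = x` (with the convention `0/0 = 0`). -/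
noncomputable def condY {X Y : Type*} [Fintype Y] (P : X × Y → ℝ) (x : X) : Y → ℝ :=
  fun y => P (x, y) / margX P x

lemma margX_nonneg {X Y : Type*} [Fintype Y] (P : X × Y → ℝ) (h : ∀ p, 0 ≤ P p) (x : X) :
    0 ≤ margX P x :=
  Finset.sum_nonneg fun _ _ => h _

lemma condY_nonneg {X Y : Type*} [Fintype Y] (P : X × Y → ℝ) (h : ∀ p, 0 ≤ P p) (x : X) (y : Y) :
    0 ≤ condY P x y :=
  div_nonneg (h _) (margX_nonneg P h x)

lemma condY_mul {X Y : Type*} [Fintype Y] (P : X × Y → ℝ) (h : ∀ p, 0 ≤ P p) (x : X) (y : Y) :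
    condY P x y * margX P x = P (x, y) := by
  rcases eq_or_lt_of_le (margX_nonneg P h x) with h0 | h0
  · have hz : P (x, y) = 0 := by
      have := (Finset.sum_eq_zero_iff_of_nonneg (fun y _ => h (x, y))).mp h0.symm
      exact this y (mem_univ y)
    simp [condY, ← h0, hz]
  · show P (x, y) / margX P x * margX P x = P (x, y)
    exact div_mul_cancel₀ _ h0.ne'

lemma condY_sum_le_one {X Y : Type*} [Fintype Y] (P : X × Y → ℝ) (h : ∀ p, 0 ≤ P p) (x : X) :
    ∑ y, condY P x y ≤ 1 := by
  rcases eq_or_lt_of_le (margX_nonneg P h x) with h0 | h0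
  · have : ∀ y : Y, condY P x y = 0 := by
      intro y
      have hz : P (x, y) = 0 := by
        have := (Finset.sum_eq_zero_iff_of_nonneg (fun y _ => h (x, y))).mp h0.symm
        exact this y (mem_univ y)
      simp [condY, hz]
    simp [this]
  · have : ∑ y, condY P x y = 1 := by
      unfold condY
      rw [← Finset.sum_div, div_eq_one_iff_eq h0.ne']
      rfl
    exact this.le

/-- Markov-type bound on conditional TV distances: for joint distributions `P`, `Q` on a
finite product space with the same support on `X`, and any `q ∈ (0,1]`, the probability
under the `Q`-marginal that `d_TV(P_{Y|X=x}, Q_{Y|X=x}) > 2·d_TV(P,Q)/q` is at most `q`. -/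
theorem conditional_tv_markov {X Y : Type*} [Fintype X] [Fintype Y]
    (P Q : X × Y → ℝ)
    (hP0 : ∀ p, 0 ≤ P p) (hP1 : ∑ p, P p = 1)
    (hQ0 : ∀ p, 0 ≤ Q p) (hQ1 : ∑ p, Q p = 1)
    (hsupp : ∀ x, 0 < margX P x ↔ 0 < margX Q x)
    (q : ℝ) (hq0 : 0 < q) (hq1 : q ≤ 1) :
    ∑ x ∈ Finset.univ.filter
        (fun x => (1/2) * ∑ y, |condY P x y - condY Q x y|
          > 2 * ((1/2) * ∑ p, |P p - Q p|) / q),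
      margX Q x ≤ q := by
  set TV : ℝ := (1/2) * ∑ p, |P p - Q p| with hTVdef
  set f : X → ℝ := fun x => (1/2) * ∑ y, |condY P x y - condY Q x y| with hfdef
  have hQX : ∀ x, 0 ≤ margX Q x := margX_nonneg Q hQ0
  have hfnn : ∀ x, 0 ≤ f x := fun x =>
    mul_nonneg (by norm_num) (Finset.sum_nonneg fun _ _ => abs_nonneg _)
  have hTVnn : 0 ≤ TV :=
    mul_nonneg (by norm_num) (Finset.sum_nonneg fun _ _ => abs_nonneg _)
  -- pointwise bound
  have hpt : ∀ x, margX Q x * (∑ y, |condY P x y - condY Q x y|) ≤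
      |margX Q x - margX P x| + ∑ y, |P (x, y) - Q (x, y)| := by
    intro x
    rw [Finset.mul_sum]
    have step : ∀ y : Y, margX Q x * |condY P x y - condY Q x y| ≤
        condY P x y * |margX Q x - margX P x| + |P (x, y) - Q (x, y)| := by
      intro y
      have h1 : margX Q x * |condY P x y - condY Q x y|
          = |condY P x y * (margX Q x - margX P x) + (P (x, y) - Q (x, y))| := by
        have e1 : condY P x y * margX P x = P (x, y) := condY_mul P hP0 x y
        have e2 : condY Q x y * margX Q x = Q (x, y) := condY_mul Q hQ0 x y
        have key : margX Q x * (condY P x y - condY Q x y)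
            = condY P x y * (margX Q x - margX P x) + (P (x, y) - Q (x, y)) := by
          linear_combination e1 - e2
        rw [← key, abs_mul, abs_of_nonneg (hQX x)]
      rw [h1]
      calc |condY P x y * (margX Q x - margX P x) + (P (x, y) - Q (x, y))|
          ≤ |condY P x y * (margX Q x - margX P x)| + |P (x, y) - Q (x, y)| := abs_add_le _ _
        _ = condY P x y * |margX Q x - margX P x| + |P (x, y) - Q (x, y)| := by
            rw [abs_mul, abs_of_nonneg (condY_nonneg P hP0 x y)]
    calc ∑ y, margX Q x * |condY P x y - condY Q x y|
        ≤ ∑ y, (condY P x y * |margX Q x - margX P x| + |P (x, y) - Q (x, y)|) :=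
          Finset.sum_le_sum fun y _ => step y
      _ = (∑ y, condY P x y) * |margX Q x - margX P x| + ∑ y, |P (x, y) - Q (x, y)| := by
          rw [Finset.sum_add_distrib, Finset.sum_mul]
      _ ≤ 1 * |margX Q x - margX P x| + ∑ y, |P (x, y) - Q (x, y)| := by
          have ha := condY_sum_le_one P hP0 x
          have hb := abs_nonneg (margX Q x - margX P x)
          nlinarith [ha, hb]
      _ = |margX Q x - margX P x| + ∑ y, |P (x, y) - Q (x, y)| := by ring
  -- averaged bound
  have hmain : ∑ x, margX Q x * f x ≤ 2 * TV := by
    have h1 : ∑ x, margX Q x * (∑ y, |condY P x y - condY Q x y|) ≤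
        (∑ x, |margX Q x - margX P x|) + ∑ x, ∑ y, |P (x, y) - Q (x, y)| := by
      rw [← Finset.sum_add_distrib]
      exact Finset.sum_le_sum fun x _ => hpt x
    have h2 : ∑ x, |margX Q x - margX P x| ≤ ∑ x, ∑ y, |P (x, y) - Q (x, y)| := by
      apply Finset.sum_le_sum
      intro x _
      unfold margX
      rw [← Finset.sum_sub_distrib]
      exact (Finset.abs_sum_le_sum_abs _ _).trans
        (Finset.sum_le_sum fun y _ => by rw [abs_sub_comm])
    have h3 : ∑ x, ∑ y, |P (x, y) - Q (x, y)| = ∑ p, |P p - Q p| :=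
      (Fintype.sum_prod_type (fun p => |P p - Q p|)).symm
    have h4 : ∑ x, margX Q x * f x
        = (1/2) * ∑ x, margX Q x * (∑ y, |condY P x y - condY Q x y|) := by
      rw [Finset.mul_sum]
      exact Finset.sum_congr rfl fun x _ => by rw [hfdef]; ring
    rw [h4, hTVdef]
    nlinarith [h1, h2, h3.ge, h3.le]
  -- Markov
  set A := Finset.univ.filter (fun x => f x > 2 * TV / q) with hA
  show ∑ x ∈ A, margX Q x ≤ q
  rcases eq_or_lt_of_le hTVnn with h0 | h0
  · -- TV = 0
    have hsum0 : ∑ x, margX Q x * f x = 0 :=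
      le_antisymm (by rw [← h0] at hmain; linarith)
        (Finset.sum_nonneg fun x _ => mul_nonneg (hQX x) (hfnn x))
    have hz : ∀ x ∈ A, margX Q x = 0 := by
      intro x hx
      have hterm : margX Q x * f x = 0 :=
        (Finset.sum_eq_zero_iff_of_nonneg
          (fun x _ => mul_nonneg (hQX x) (hfnn x))).mp hsum0 x (mem_univ x)
      have hfx : 0 < f x := by
        have hgt := (Finset.mem_filter.mp hx).2
        rw [← h0] at hgt
        simpa using hgt
      rcases mul_eq_zero.mp hterm with h | h
      · exact h
      · exact absurd h hfx.ne'
    rw [Finset.sum_eq_zero hz]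
    linarith
  · -- TV > 0
    have ht : 0 < 2 * TV / q := by positivity
    have h1 : (∑ x ∈ A, margX Q x) * (2 * TV / q) ≤ ∑ x ∈ A, margX Q x * f x := by
      rw [Finset.sum_mul]
      apply Finset.sum_le_sum
      intro x hx
      exact mul_le_mul_of_nonneg_left (Finset.mem_filter.mp hx).2.le (hQX x)
    have h2 : ∑ x ∈ A, margX Q x * f x ≤ ∑ x, margX Q x * f x :=
      Finset.sum_le_sum_of_subset_of_nonneg (Finset.subset_univ A)
        (fun x _ _ => mul_nonneg (hQX x) (hfnn x))
    have h3 : (∑ x ∈ A, margX Q x) * (2 * TV / q) ≤ q * (2 * TV / q) := by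
      have he : q * (2 * TV / q) = 2 * TV := by field_simp
      rw [he]
      linarith
    exact le_of_mul_le_mul_right h3 ht
end

section
/- Let D̂ be a joint distribution on a finite product space T₁ × ⋯ × Tₙ whose i-th marginal is Dᵢ, and let D = D₁ × ⋯ × Dₙ be the product of these marginals. If there exists a product distribution D^p = D^p₁ × ⋯ × D^pₙ with d_TV(D̂, D^p) ≤ ε, then d_TV(D, D̂) ≤ (n+1)·ε. -/
open Finset

/-- The `i`-th marginal of a joint mass function on a finite product space. -/
noncomputable def jointMarginal {n : ℕ} {T : Fin n → Type*} [∀ i, Fintype (T i)]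
    [∀ i, DecidableEq (T i)] (D : (∀ i, T i) → ℝ) (i : Fin n) : T i → ℝ :=
  fun v => ∑ t : (∀ j, T j), if t i = v then D t else 0

/-- Sum over the product space of a product factorizes. -/
lemma sum_prod_pi {n : ℕ} {T : Fin n → Type*} [∀ i, Fintype (T i)]
    (h : ∀ i, T i → ℝ) :
    ∑ t : (∀ i, T i), ∏ i, h i (t i) = ∏ i, ∑ x, h i x := by
  rw [Finset.prod_univ_sum, Fintype.piFinset_univ]

/-- Tensorization of total variation distance for product distributions. -/
lemma tv_prod_le : ∀ (n : ℕ) (T : Fin n → Type u) (_ : ∀ i, Fintype (T i))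
    (f g : ∀ i, T i → ℝ), (∀ i x, 0 ≤ f i x) → (∀ i x, 0 ≤ g i x) →
    (∀ i, ∑ x, f i x = 1) → (∀ i, ∑ x, g i x = 1) →
    ∑ t : (∀ i, T i), |(∏ i, f i (t i)) - ∏ i, g i (t i)| ≤ ∑ i, ∑ x, |f i x - g i x| := by
  intro n
  induction n with
  | zero => intro T inst f g _ _ _ _; simp
  | succ n ih =>
    intro T inst f g hf0 hg0 hf1 hg1
    have key := ih (fun i => T i.succ) (fun i => inferInstance)
      (fun i => f i.succ) (fun i => g i.succ)
      (fun i x => hf0 _ x) (fun i x => hg0 _ x)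
      (fun i => hf1 _) (fun i => hg1 _)
    have hsum : ∑ t : (∀ i : Fin (n+1), T i), |(∏ i, f i (t i)) - ∏ i, g i (t i)|
        = ∑ x : T 0, ∑ t' : (∀ i : Fin n, T i.succ),
            |f 0 x * ∏ i, f i.succ (t' i) - g 0 x * ∏ i, g i.succ (t' i)| := by
      rw [← (Fin.consEquiv T).sum_comp (fun t => |(∏ i, f i (t i)) - ∏ i, g i (t i)|),
        Fintype.sum_prod_type]
      apply Finset.sum_congr rfl; intro x _
      apply Finset.sum_congr rfl; intro t' _
      simp [Fin.prod_univ_succ, Fin.consEquiv]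
    rw [hsum]
    have step : ∀ (x : T 0) (t' : ∀ i : Fin n, T i.succ),
        |f 0 x * ∏ i, f i.succ (t' i) - g 0 x * ∏ i, g i.succ (t' i)|
          ≤ |f 0 x - g 0 x| * ∏ i, g i.succ (t' i)
            + f 0 x * |(∏ i, f i.succ (t' i)) - ∏ i, g i.succ (t' i)| := by
      intro x t'
      have hG : (0:ℝ) ≤ ∏ i, g i.succ (t' i) := Finset.prod_nonneg fun i _ => hg0 _ _
      have heq : f 0 x * ∏ i, f i.succ (t' i) - g 0 x * ∏ i, g i.succ (t' i)
          = (f 0 x - g 0 x) * (∏ i, g i.succ (t' i))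
            + f 0 x * ((∏ i, f i.succ (t' i)) - ∏ i, g i.succ (t' i)) := by ring
      rw [heq]
      calc _ ≤ |(f 0 x - g 0 x) * (∏ i, g i.succ (t' i))|
            + |f 0 x * ((∏ i, f i.succ (t' i)) - ∏ i, g i.succ (t' i))| := abs_add_le _ _
        _ = _ := by
            rw [abs_mul, abs_mul, abs_of_nonneg hG, abs_of_nonneg (hf0 0 x)]
    have hGsum : ∑ t' : (∀ i : Fin n, T i.succ), ∏ i, g i.succ (t' i) = 1 := by
      rw [sum_prod_pi]; simp [hg1]
    calc ∑ x : T 0, ∑ t' : (∀ i : Fin n, T i.succ),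
            |f 0 x * ∏ i, f i.succ (t' i) - g 0 x * ∏ i, g i.succ (t' i)|
        ≤ ∑ x : T 0, ∑ t' : (∀ i : Fin n, T i.succ),
            (|f 0 x - g 0 x| * ∏ i, g i.succ (t' i)
              + f 0 x * |(∏ i, f i.succ (t' i)) - ∏ i, g i.succ (t' i)|) :=
          Finset.sum_le_sum fun x _ => Finset.sum_le_sum fun t' _ => step x t'
      _ = (∑ x : T 0, |f 0 x - g 0 x|) * (∑ t' : (∀ i : Fin n, T i.succ), ∏ i, g i.succ (t' i))
            + (∑ x : T 0, f 0 x) * (∑ t' : (∀ i : Fin n, T i.succ),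
                |(∏ i, f i.succ (t' i)) - ∏ i, g i.succ (t' i)|) := by
          simp only [Finset.sum_add_distrib, ← Finset.mul_sum]
          rw [← Finset.sum_mul, ← Finset.sum_mul]
      _ = (∑ x : T 0, |f 0 x - g 0 x|)
            + ∑ t' : (∀ i : Fin n, T i.succ), |(∏ i, f i.succ (t' i)) - ∏ i, g i.succ (t' i)| := by
          rw [hGsum, hf1 0]; ring
      _ ≤ (∑ x : T 0, |f 0 x - g 0 x|) + ∑ i : Fin n, ∑ x, |f i.succ x - g i.succ x| := by
          linarith [key]
      _ = ∑ i : Fin (n+1), ∑ x, |f i x - g i x| := by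
          rw [Fin.sum_univ_succ]

/-- The marginal of a product distribution is the corresponding factor. -/
lemma jointMarginal_prod {n : ℕ} {T : Fin n → Type*} [∀ i, Fintype (T i)]
    [∀ i, DecidableEq (T i)] (Dp : ∀ i, T i → ℝ) (hDp1 : ∀ i, ∑ x, Dp i x = 1)
    (i : Fin n) (x : T i) :
    jointMarginal (fun t => ∏ j, Dp j (t j)) i x = Dp i x := by
  classical
  set q : ∀ j, T j → ℝ := fun j y =>
    if hj : j = i then (if cast (congrArg T hj) y = x then Dp j y else 0) else Dp j y with hq
  have hpoint : ∀ t : ∀ j, T j,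
      (if t i = x then ∏ j, Dp j (t j) else 0) = ∏ j, q j (t j) := by
    intro t
    by_cases h : t i = x
    · rw [if_pos h]
      apply Finset.prod_congr rfl
      intro j _
      by_cases hj : j = i
      · subst hj; simp [hq, h]
      · simp [hq, hj]
    · rw [if_neg h]
      symm
      apply Finset.prod_eq_zero (Finset.mem_univ i)
      simp [hq, h]
  show (∑ t : (∀ j, T j), if t i = x then ∏ j, Dp j (t j) else 0) = Dp i x
  calc (∑ t : (∀ j, T j), if t i = x then ∏ j, Dp j (t j) else 0)
      = ∑ t : (∀ j, T j), ∏ j, q j (t j) := Finset.sum_congr rfl fun t _ => hpoint t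
    _ = ∏ j, ∑ y, q j y := sum_prod_pi q
    _ = Dp i x := by
        rw [Finset.prod_eq_single i]
        · simp [hq]
        · intro j _ hj; simp [hq, hj, hDp1 j]
        · simp

/-- Data processing: each marginal is close to the corresponding factor. -/
lemma marginal_tv_le {n : ℕ} {T : Fin n → Type*} [∀ i, Fintype (T i)]
    [∀ i, DecidableEq (T i)]
    (Dh : (∀ i, T i) → ℝ) (Dp : ∀ i, T i → ℝ) (hDp1 : ∀ i, ∑ x, Dp i x = 1) (i : Fin n) :
    ∑ x, |jointMarginal Dh i x - Dp i x| ≤ ∑ t, |Dh t - ∏ j, Dp j (t j)| := by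
  have hD : ∀ x : T i, Dp i x
      = ∑ t : (∀ j, T j), if t i = x then (∏ j, Dp j (t j)) else 0 :=
    fun x => (jointMarginal_prod Dp hDp1 i x).symm
  calc ∑ x, |jointMarginal Dh i x - Dp i x|
      = ∑ x, |∑ t : (∀ j, T j),
          ((if t i = x then Dh t else 0) - (if t i = x then ∏ j, Dp j (t j) else 0))| := by
        apply Finset.sum_congr rfl; intro x _
        rw [jointMarginal, hD x, ← Finset.sum_sub_distrib]
    _ ≤ ∑ x, ∑ t : (∀ j, T j),
          |(if t i = x then Dh t else 0) - (if t i = x then ∏ j, Dp j (t j) else 0)| :=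
        Finset.sum_le_sum fun x _ => Finset.abs_sum_le_sum_abs _ _
    _ = ∑ t : (∀ j, T j), ∑ x, (if t i = x then |Dh t - ∏ j, Dp j (t j)| else 0) := by
        rw [Finset.sum_comm]
        apply Finset.sum_congr rfl; intro t _
        apply Finset.sum_congr rfl; intro x _
        split <;> simp
    _ = ∑ t, |Dh t - ∏ j, Dp j (t j)| := by simp

/-- If a joint distribution `D̂` is within TV distance `ε` of some product distribution,
then it is within TV distance `(n+1)·ε` of the product of its own marginals. -/
theorem tv_product_of_marginals_le {n : ℕ} {T : Fin n → Type*} [∀ i, Fintype (T i)]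
    [∀ i, DecidableEq (T i)]
    (Dh : (∀ i, T i) → ℝ)
    (hDh0 : ∀ t, 0 ≤ Dh t) (hDh1 : ∑ t, Dh t = 1)
    (Dp : ∀ i, T i → ℝ)
    (hDp0 : ∀ i x, 0 ≤ Dp i x) (hDp1 : ∀ i, ∑ x, Dp i x = 1)
    (ε : ℝ)
    (h : (1/2) * ∑ t, |Dh t - ∏ i, Dp i (t i)| ≤ ε) :
    (1/2) * ∑ t : (∀ i, T i), |(∏ i, jointMarginal Dh i (t i)) - Dh t|
      ≤ (n + 1) * ε := by
  have hM0 : ∀ i x, 0 ≤ jointMarginal Dh i x := by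
    intro i x
    apply Finset.sum_nonneg
    intro t _
    split
    · exact hDh0 t
    · exact le_refl 0
  have hM1 : ∀ i, ∑ x, jointMarginal Dh i x = 1 := by
    intro i
    rw [← hDh1]
    unfold jointMarginal
    rw [Finset.sum_comm]
    simp
  have h1 : ∑ t : (∀ i, T i), |(∏ i, jointMarginal Dh i (t i)) - ∏ i, Dp i (t i)|
      ≤ ∑ i, ∑ x, |jointMarginal Dh i x - Dp i x| :=
    tv_prod_le n T inferInstance (jointMarginal Dh) Dp hM0 hDp0 hM1 hDp1
  have h2 : ∀ i : Fin n, ∑ x, |jointMarginal Dh i x - Dp i x|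
      ≤ ∑ t, |Dh t - ∏ j, Dp j (t j)| :=
    marginal_tv_le Dh Dp hDp1
  have h3 : ∑ t : (∀ i, T i), |Dh t - ∏ i, Dp i (t i)| ≤ 2 * ε := by linarith
  have h4 : ∑ i : Fin n, ∑ x, |jointMarginal Dh i x - Dp i x| ≤ n * (2 * ε) := by
    calc ∑ i : Fin n, ∑ x, |jointMarginal Dh i x - Dp i x|
        ≤ ∑ _i : Fin n, ∑ t : (∀ i, T i), |Dh t - ∏ i, Dp i (t i)| :=
          Finset.sum_le_sum fun i _ => h2 i
      _ = n * ∑ t : (∀ i, T i), |Dh t - ∏ i, Dp i (t i)| := by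
          rw [Finset.sum_const, card_univ, Fintype.card_fin]; ring
      _ ≤ n * (2 * ε) := by
          have hn : (0:ℝ) ≤ n := Nat.cast_nonneg n
          nlinarith
  have htri : ∑ t : (∀ i, T i), |(∏ i, jointMarginal Dh i (t i)) - Dh t|
      ≤ ∑ t : (∀ i, T i), |(∏ i, jointMarginal Dh i (t i)) - ∏ i, Dp i (t i)|
        + ∑ t : (∀ i, T i), |Dh t - ∏ i, Dp i (t i)| := by
    rw [← Finset.sum_add_distrib]
    apply Finset.sum_le_sum
    intro t _
    calc |(∏ i, jointMarginal Dh i (t i)) - Dh t|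
        ≤ |(∏ i, jointMarginal Dh i (t i)) - ∏ i, Dp i (t i)|
          + |(∏ i, Dp i (t i)) - Dh t| := abs_sub_le _ _ _
      _ = |(∏ i, jointMarginal Dh i (t i)) - ∏ i, Dp i (t i)|
          + |Dh t - ∏ i, Dp i (t i)| := by rw [abs_sub_comm (∏ i, Dp i (t i)) (Dh t)]
  linarith
end

section
/- Approximate BIC under TV perturbation (abstract form): Let T₁, …, Tₙ be finite type sets and let D, D̂ be distributions on T = T₁ × ⋯ × Tₙ with the same support and d_TV(D, D̂) ≤ δ. Fix agent i and a function u : Tᵢ × Tᵢ × T₋ᵢ → [−H, 3H] (utility differences). Suppose for all tᵢ, wᵢ, 𝔼_{t₋ᵢ ∼ D₋ᵢ|tᵢ}[u(tᵢ, wᵢ, t₋ᵢ)] ≥ 0. Then for every q ∈ (0,1], with probability at least 1−q over tᵢ ∼ D̂ᵢ, it holds for all wᵢ that 𝔼_{t₋ᵢ ∼ D̂₋ᵢ|tᵢ}[u(tᵢ, wᵢ, t₋ᵢ)] ≥ −8Hδ/q. -/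
open Finset
open scoped Classical

/-- Approximate BIC under TV perturbation (abstract form): suppose `D`, `D̂` are joint
distributions on `Tᵢ × T₋ᵢ` with the same support and `d_TV(D,D̂) ≤ δ`, and
`u ti wi tmi ∈ [-H, 3H]` are utility differences with nonnegative conditional
expectation under `D` (BIC). Then for every `q ∈ (0,1]`, with probability at least
`1 − q` over `tᵢ ∼ D̂ᵢ`, for all misreports `wᵢ` the conditional expectation under `D̂`
is at least `−8Hδ/q`. Conditionals use the convention `0/0 = 0`. -/
theorem approx_bic_of_tv_close {Ti Tmi : Type*} [Fintype Ti] [Fintype Tmi]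
    (D Dh : Ti × Tmi → ℝ)
    (hD0 : ∀ p, 0 ≤ D p) (hD1 : ∑ p, D p = 1)
    (hDh0 : ∀ p, 0 ≤ Dh p) (hDh1 : ∑ p, Dh p = 1)
    (hsupp : ∀ p, 0 < D p ↔ 0 < Dh p)
    (H δ : ℝ) (hH : 0 ≤ H)
    (hδ : (1/2) * ∑ p, |D p - Dh p| ≤ δ)
    (u : Ti → Ti → Tmi → ℝ)
    (hu : ∀ ti wi tmi, -H ≤ u ti wi tmi ∧ u ti wi tmi ≤ 3 * H)
    (hBIC : ∀ ti wi,
      0 ≤ ∑ tmi, (D (ti, tmi) / ∑ s, D (ti, s)) * u ti wi tmi)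
    (q : ℝ) (hq0 : 0 < q) (hq1 : q ≤ 1) :
    ∑ ti ∈ Finset.univ.filter (fun ti =>
        ¬ ∀ wi, -(8 * H * δ) / q
          ≤ ∑ tmi, (Dh (ti, tmi) / ∑ s, Dh (ti, s)) * u ti wi tmi),
      (∑ tmi, Dh (ti, tmi)) ≤ q := by
  classical
  set Di : Ti → ℝ := fun ti => ∑ s, D (ti, s) with hDidef
  set Dhi : Ti → ℝ := fun ti => ∑ s, Dh (ti, s) with hDhidef
  have hδ0 : 0 ≤ δ := le_trans (by positivity) hδ
  have habs : ∑ p, |D p - Dh p| ≤ 2 * δ := by linarith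
  have hDi0 : ∀ ti, 0 ≤ Di ti := fun ti => Finset.sum_nonneg fun s _ => hD0 _
  have hDhi0 : ∀ ti, 0 ≤ Dhi ti := fun ti => Finset.sum_nonneg fun s _ => hDh0 _
  have hmarg : ∀ ti, 0 < Dhi ti → 0 < Di ti := by
    intro ti h
    by_contra hc
    push_neg at hc
    have hzero : Di ti = 0 := le_antisymm hc (hDi0 ti)
    have hall : ∀ s ∈ (univ : Finset Tmi), D (ti, s) = 0 :=
      (Finset.sum_eq_zero_iff_of_nonneg (fun s _ => hD0 _)).mp hzero
    have hz : Dhi ti = 0 := Finset.sum_eq_zero fun s _ => by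
      have h1 : ¬ 0 < D (ti, s) := by
        rw [hall s (mem_univ s)]; exact lt_irrefl 0
      have h2 : ¬ 0 < Dh (ti, s) := fun h2 => h1 ((hsupp _).mpr h2)
      exact le_antisymm (not_lt.mp h2) (hDh0 _)
    rw [hz] at h; exact lt_irrefl 0 h
  set A : Ti → ℝ := fun ti =>
    (∑ tmi, |Dh (ti, tmi) - D (ti, tmi)|) + |Di ti - Dhi ti| with hAdef
  have hA0 : ∀ ti, 0 ≤ A ti := fun ti =>
    add_nonneg (Finset.sum_nonneg fun _ _ => abs_nonneg _) (abs_nonneg _)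
  have hprod : ∑ ti, ∑ tmi, |D (ti, tmi) - Dh (ti, tmi)| ≤ 2 * δ := by
    have heq := Fintype.sum_prod_type (f := fun p : Ti × Tmi => |D p - Dh p|)
    rw [← heq]; exact habs
  have hAsum : ∑ ti, A ti ≤ 4 * δ := by
    have h1 : ∑ ti, ∑ tmi, |Dh (ti, tmi) - D (ti, tmi)| ≤ 2 * δ := by
      calc ∑ ti, ∑ tmi, |Dh (ti, tmi) - D (ti, tmi)|
          = ∑ ti, ∑ tmi, |D (ti, tmi) - Dh (ti, tmi)| := by
            refine Finset.sum_congr rfl fun ti _ => Finset.sum_congr rfl fun tmi _ => ?_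
            exact abs_sub_comm _ _
        _ ≤ 2 * δ := hprod
    have h2 : ∑ ti, |Di ti - Dhi ti| ≤ 2 * δ := by
      calc ∑ ti, |Di ti - Dhi ti|
          ≤ ∑ ti, ∑ tmi, |D (ti, tmi) - Dh (ti, tmi)| := by
            refine Finset.sum_le_sum fun ti _ => ?_
            have : Di ti - Dhi ti = ∑ tmi, (D (ti, tmi) - Dh (ti, tmi)) := by
              rw [hDidef, hDhidef]; rw [← Finset.sum_sub_distrib]
            rw [this]
            exact Finset.abs_sum_le_sum_abs _ _
        _ ≤ 2 * δ := hprod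
    calc ∑ ti, A ti
        = (∑ ti, ∑ tmi, |Dh (ti, tmi) - D (ti, tmi)|) + ∑ ti, |Di ti - Dhi ti| := by
          rw [hAdef, Finset.sum_add_distrib]
      _ ≤ 2 * δ + 2 * δ := add_le_add h1 h2
      _ = 4 * δ := by ring
  -- key per-type bound
  have hkey : ∀ ti, 0 < Dhi ti → ∀ wi,
      -(2 * H * A ti / Dhi ti) ≤ ∑ tmi, (Dh (ti, tmi) / Dhi ti) * u ti wi tmi := by
    intro ti hpos wi
    have hDip : 0 < Di ti := hmarg ti hpos
    have hsum1 : ∑ tmi, Dh (ti, tmi) / Dhi ti = 1 := by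
      rw [← Finset.sum_div]; exact div_self hpos.ne'
    have hsum2 : ∑ tmi, D (ti, tmi) / Di ti = 1 := by
      rw [← Finset.sum_div]; exact div_self hDip.ne'
    have htvbound : ∑ tmi, |Dh (ti, tmi) / Dhi ti - D (ti, tmi) / Di ti|
        ≤ A ti / Dhi ti := by
      have hpt : ∀ tmi, |Dh (ti, tmi) / Dhi ti - D (ti, tmi) / Di ti|
          ≤ (|Dh (ti, tmi) - D (ti, tmi)| + (D (ti, tmi) / Di ti) * |Di ti - Dhi ti|)
            / Dhi ti := by
        intro tmi
        have hid : Dh (ti, tmi) / Dhi ti - D (ti, tmi) / Di ti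
            = ((Dh (ti, tmi) - D (ti, tmi))
              + (D (ti, tmi) / Di ti) * (Di ti - Dhi ti)) / Dhi ti := by
          field_simp
          ring
        rw [hid, abs_div, abs_of_pos hpos]
        apply div_le_div_of_nonneg_right ?_ hpos.le
        calc |Dh (ti, tmi) - D (ti, tmi) + D (ti, tmi) / Di ti * (Di ti - Dhi ti)|
            ≤ |Dh (ti, tmi) - D (ti, tmi)| + |D (ti, tmi) / Di ti * (Di ti - Dhi ti)| :=
              abs_add_le _ _
          _ = |Dh (ti, tmi) - D (ti, tmi)|
              + (D (ti, tmi) / Di ti) * |Di ti - Dhi ti| := by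
              rw [abs_mul, abs_of_nonneg (div_nonneg (hD0 _) (hDi0 ti))]
      calc ∑ tmi, |Dh (ti, tmi) / Dhi ti - D (ti, tmi) / Di ti|
          ≤ ∑ tmi, (|Dh (ti, tmi) - D (ti, tmi)|
              + (D (ti, tmi) / Di ti) * |Di ti - Dhi ti|) / Dhi ti :=
            Finset.sum_le_sum fun tmi _ => hpt tmi
        _ = ((∑ tmi, |Dh (ti, tmi) - D (ti, tmi)|)
              + (∑ tmi, D (ti, tmi) / Di ti) * |Di ti - Dhi ti|) / Dhi ti := by
            rw [← Finset.sum_div, Finset.sum_add_distrib, Finset.sum_mul]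
        _ = A ti / Dhi ti := by rw [hsum2, one_mul, hAdef]
    have hdiff : |∑ tmi, (Dh (ti, tmi) / Dhi ti - D (ti, tmi) / Di ti) * u ti wi tmi|
        ≤ 2 * H * A ti / Dhi ti := by
      have heq : ∑ tmi, (Dh (ti, tmi) / Dhi ti - D (ti, tmi) / Di ti) * u ti wi tmi
          = ∑ tmi, (Dh (ti, tmi) / Dhi ti - D (ti, tmi) / Di ti) * (u ti wi tmi - H) := by
        have h0 : ∑ tmi, (Dh (ti, tmi) / Dhi ti - D (ti, tmi) / Di ti) = 0 := by
          rw [Finset.sum_sub_distrib, hsum1, hsum2, sub_self]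
        have : ∑ tmi, (Dh (ti, tmi) / Dhi ti - D (ti, tmi) / Di ti) * (u ti wi tmi - H)
            = ∑ tmi, (Dh (ti, tmi) / Dhi ti - D (ti, tmi) / Di ti) * u ti wi tmi
              - (∑ tmi, (Dh (ti, tmi) / Dhi ti - D (ti, tmi) / Di ti)) * H := by
          rw [Finset.sum_mul, ← Finset.sum_sub_distrib]
          exact Finset.sum_congr rfl fun tmi _ => by ring
        rw [this, h0, zero_mul, sub_zero]
      rw [heq]
      calc |∑ tmi, (Dh (ti, tmi) / Dhi ti - D (ti, tmi) / Di ti) * (u ti wi tmi - H)|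
          ≤ ∑ tmi, |(Dh (ti, tmi) / Dhi ti - D (ti, tmi) / Di ti) * (u ti wi tmi - H)| :=
            Finset.abs_sum_le_sum_abs _ _
        _ ≤ ∑ tmi, |Dh (ti, tmi) / Dhi ti - D (ti, tmi) / Di ti| * (2 * H) := by
            refine Finset.sum_le_sum fun tmi _ => ?_
            rw [abs_mul]
            refine mul_le_mul_of_nonneg_left ?_ (abs_nonneg _)
            have h1 := (hu ti wi tmi).1
            have h2 := (hu ti wi tmi).2
            rw [abs_le]; constructor <;> linarith
        _ = (∑ tmi, |Dh (ti, tmi) / Dhi ti - D (ti, tmi) / Di ti|) * (2 * H) := by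
            rw [Finset.sum_mul]
        _ ≤ (A ti / Dhi ti) * (2 * H) :=
            mul_le_mul_of_nonneg_right htvbound (by positivity)
        _ = 2 * H * A ti / Dhi ti := by ring
    have hsplit : ∑ tmi, (Dh (ti, tmi) / Dhi ti) * u ti wi tmi
        = (∑ tmi, (D (ti, tmi) / Di ti) * u ti wi tmi)
          + ∑ tmi, (Dh (ti, tmi) / Dhi ti - D (ti, tmi) / Di ti) * u ti wi tmi := by
      rw [← Finset.sum_add_distrib]
      exact Finset.sum_congr rfl fun tmi _ => by ring
    have hbic := hBIC ti wi
    have hlow := neg_le_of_abs_le hdiff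
    rw [hsplit]
    have hbic' : 0 ≤ ∑ tmi, (D (ti, tmi) / Di ti) * u ti wi tmi := hbic
    linarith
  -- bad set analysis
  set B := Finset.univ.filter (fun ti =>
      ¬ ∀ wi, -(8 * H * δ) / q
        ≤ ∑ tmi, (Dh (ti, tmi) / Dhi ti) * u ti wi tmi) with hBdef
  rcases hH.lt_or_eq with hHpos | hHzero
  · -- H > 0
    have hbadA : ∀ ti ∈ B, 4 * δ * Dhi ti < q * A ti := by
      intro ti hti
      rw [hBdef, Finset.mem_filter] at hti
      obtain ⟨-, hbad⟩ := hti
      push_neg at hbad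
      obtain ⟨wi, hwi⟩ := hbad
      have hpos : 0 < Dhi ti := by
        by_contra hc
        push_neg at hc
        have hz : Dhi ti = 0 := le_antisymm hc (hDhi0 ti)
        have hall : ∀ s ∈ (univ : Finset Tmi), Dh (ti, s) = 0 :=
          (Finset.sum_eq_zero_iff_of_nonneg (fun s _ => hDh0 _)).mp hz
        have hzero : ∑ tmi, (Dh (ti, tmi) / Dhi ti) * u ti wi tmi = 0 :=
          Finset.sum_eq_zero fun tmi _ => by
            rw [hall tmi (mem_univ tmi), zero_div, zero_mul]
        rw [hzero] at hwi
        have : -(8 * H * δ) / q ≤ 0 := by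
          apply div_nonpos_of_nonpos_of_nonneg _ hq0.le
          nlinarith
        linarith
      have hk := hkey ti hpos wi
      have h1 : 8 * H * δ / q < 2 * H * A ti / Dhi ti := by
        have : -(2 * H * A ti / Dhi ti) < -(8 * H * δ) / q := lt_of_le_of_lt hk hwi
        have h2 : -(8 * H * δ) / q = -(8 * H * δ / q) := by ring
        rw [h2] at this
        linarith
      rw [div_lt_div_iff₀ hq0 hpos] at h1
      nlinarith
    have hfin : 4 * δ * ∑ ti ∈ B, Dhi ti ≤ q * (4 * δ) := by
      calc 4 * δ * ∑ ti ∈ B, Dhi ti = ∑ ti ∈ B, 4 * δ * Dhi ti := by rw [Finset.mul_sum]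
        _ ≤ ∑ ti ∈ B, q * A ti := Finset.sum_le_sum fun ti hti => (hbadA ti hti).le
        _ = q * ∑ ti ∈ B, A ti := by rw [Finset.mul_sum]
        _ ≤ q * ∑ ti, A ti := by
            refine mul_le_mul_of_nonneg_left ?_ hq0.le
            exact Finset.sum_le_sum_of_subset_of_nonneg (Finset.subset_univ _)
              fun ti _ _ => hA0 ti
        _ ≤ q * (4 * δ) := mul_le_mul_of_nonneg_left hAsum hq0.le
    rcases hδ0.lt_or_eq with hδpos | hδzero
    · have h4δ : (0:ℝ) < 4 * δ := by linarith
      have := le_of_mul_le_mul_left (by linarith : 4 * δ * ∑ ti ∈ B, Dhi ti ≤ 4 * δ * q) h4δ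
      exact this
    · -- δ = 0 : B is empty
      have hBempty : B = ∅ := by
        rw [Finset.eq_empty_iff_forall_notMem]
        intro ti hti
        have h := hbadA ti hti
        rw [← hδzero] at h
        have hA := hA0 ti
        have hAle : A ti ≤ ∑ t, A t :=
          Finset.single_le_sum (fun t _ => hA0 t) (mem_univ ti)
        rw [← hδzero] at hAsum
        nlinarith
      rw [hBempty]
      simpa using hq0.le
  · -- H = 0 : all u are zero, so B is empty
    have hBempty : B = ∅ := by
      rw [Finset.eq_empty_iff_forall_notMem]
      intro ti hti
      rw [hBdef, Finset.mem_filter] at hti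
      obtain ⟨-, hbad⟩ := hti
      apply hbad
      intro wi
      have hzero : ∑ tmi, (Dh (ti, tmi) / Dhi ti) * u ti wi tmi = 0 :=
        Finset.sum_eq_zero fun tmi _ => by
          have h1 := (hu ti wi tmi).1
          have h2 := (hu ti wi tmi).2
          have : u ti wi tmi = 0 := by rw [← hHzero] at h1 h2; linarith
          rw [this, mul_zero]
      rw [hzero, ← hHzero]
      simp
    rw [hBempty]
    simpa using hq0.le
end

section
/- Min-over-consistent-joints robustness: Let (D₁,…,Dₙ) and (D₁',…,Dₙ') be tuples of marginal distributions on finite sets T₁,…,Tₙ with d_TV(Dᵢ, Dᵢ') ≤ ε for all i. Then for every distribution D on T₁ × ⋯ × Tₙ with marginals (D₁,…,Dₙ), there exists a distribution D' with marginals (D₁',…,Dₙ') such that d_TV(D, D') ≤ n·ε. -/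
open Finset

/-- `D` is a joint probability mass function on `∀ i, T i` whose `i`-th marginal is `M i`. -/
def HasMarginals {n : ℕ} {T : Fin n → Type*} [∀ i, Fintype (T i)]
    [∀ i, DecidableEq (T i)] (D : (∀ i, T i) → ℝ) (M : ∀ i, T i → ℝ) : Prop :=
  (∀ t, 0 ≤ D t) ∧ (∑ t, D t = 1) ∧
    ∀ i v, (∑ t : (∀ j, T j), if t i = v then D t else 0) = M i v

section Kernel
variable {α : Type*} [Fintype α] [DecidableEq α]

noncomputable def omeg (p q : α → ℝ) (u v : α) : ℝ :=
  (if u = v then min (p u) (q u) else 0) +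
    (p u - min (p u) (q u)) * (q v - min (p v) (q v)) / (∑ w, (p w - min (p w) (q w)))

noncomputable def kern (p q : α → ℝ) (u v : α) : ℝ :=
  if p u = 0 then q v else omeg p q u v / p u

lemma omeg_nonneg {p q : α → ℝ} (hp0 : ∀ u, 0 ≤ p u) (hq0 : ∀ u, 0 ≤ q u) (u v : α) :
    0 ≤ omeg p q u v := by
  have h1 : 0 ≤ p u - min (p u) (q u) := by simp [min_le_left]
  have h2 : 0 ≤ q v - min (p v) (q v) := by simp [min_le_right]
  have h3 : 0 ≤ ∑ w, (p w - min (p w) (q w)) :=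
    Finset.sum_nonneg fun w _ => by simp [min_le_left]
  have h4 : (0:ℝ) ≤ if u = v then min (p u) (q u) else 0 := by
    split
    · exact le_min (hp0 u) (hq0 u)
    · exact le_refl 0
  exact add_nonneg h4 (div_nonneg (mul_nonneg h1 h2) h3)

lemma zero_of_delta_zero {p q : α → ℝ}
    (hδ : ∑ w, (p w - min (p w) (q w)) = 0) (u : α) : p u - min (p u) (q u) = 0 :=
  (Finset.sum_eq_zero_iff_of_nonneg (fun w _ => by simp [min_le_left])).1 hδ u (mem_univ u)

lemma delta_eq {p q : α → ℝ} (hp1 : ∑ u, p u = 1) (hq1 : ∑ u, q u = 1) :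
    ∑ w, (q w - min (p w) (q w)) = ∑ w, (p w - min (p w) (q w)) := by
  simp [Finset.sum_sub_distrib, hp1, hq1]

lemma omeg_row_sum {p q : α → ℝ}
    (hp1 : ∑ u, p u = 1) (hq1 : ∑ u, q u = 1) (u : α) : ∑ v, omeg p q u v = p u := by
  unfold omeg
  rw [Finset.sum_add_distrib]
  rw [Finset.sum_ite_eq univ u (fun _ => min (p u) (q u))]
  rw [← Finset.sum_div, ← Finset.mul_sum, delta_eq hp1 hq1]
  set δ := ∑ w, (p w - min (p w) (q w)) with hδ
  by_cases hz : δ = 0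
  · have h5 := zero_of_delta_zero (hδ ▸ hz) u
    have h6 : min (p u) (q u) = p u := by linarith
    rw [hz]
    simp [h6]
  · rw [mul_div_assoc, div_self hz, mul_one]
    simp

lemma omeg_col_sum {p q : α → ℝ}
    (hp1 : ∑ u, p u = 1) (hq1 : ∑ u, q u = 1) (v : α) : ∑ u, omeg p q u v = q v := by
  unfold omeg
  rw [Finset.sum_add_distrib]
  rw [Finset.sum_ite_eq' univ v (fun u => min (p u) (q u))]
  simp_rw [mul_div_assoc]
  rw [← Finset.sum_mul]
  set δ := ∑ w, (p w - min (p w) (q w)) with hδ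
  by_cases hz : δ = 0
  · have hδ' : ∑ w, (q w - min (q w) (p w)) = 0 := by
      simp_rw [min_comm (q _) (p _)]
      rw [delta_eq hp1 hq1, ← hδ, hz]
    have h5 := zero_of_delta_zero hδ' v
    rw [min_comm (q v) (p v)] at h5
    have h6 : min (p v) (q v) = q v := by linarith
    rw [hz]
    simp [h6]
  · rw [mul_comm, div_mul_cancel₀ _ hz]
    simp

lemma omeg_diag {p q : α → ℝ} (hp0 : ∀ u, 0 ≤ p u) (hq0 : ∀ u, 0 ≤ q u) (u : α) :
    min (p u) (q u) ≤ omeg p q u u := by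
  have h1 : 0 ≤ p u - min (p u) (q u) := by simp [min_le_left]
  have h2 : 0 ≤ q u - min (p u) (q u) := by simp [min_le_right]
  have h3 : 0 ≤ ∑ w, (p w - min (p w) (q w)) :=
    Finset.sum_nonneg fun w _ => by simp [min_le_left]
  have h4 := div_nonneg (mul_nonneg h1 h2) h3
  unfold omeg
  rw [if_pos rfl]
  linarith

lemma kern_nonneg {p q : α → ℝ} (hp0 : ∀ u, 0 ≤ p u) (hq0 : ∀ u, 0 ≤ q u) (u v : α) :
    0 ≤ kern p q u v := by
  unfold kern
  split
  · exact hq0 v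
  · exact div_nonneg (omeg_nonneg hp0 hq0 u v) (hp0 u)

lemma kern_row_sum {p q : α → ℝ}
    (hp1 : ∑ u, p u = 1) (hq1 : ∑ u, q u = 1) (u : α) : ∑ v, kern p q u v = 1 := by
  unfold kern
  split
  · exact hq1
  · rw [← Finset.sum_div, omeg_row_sum hp1 hq1, div_self ‹¬ p u = 0›]

lemma mul_kern {p q : α → ℝ} (hp0 : ∀ u, 0 ≤ p u) (hq0 : ∀ u, 0 ≤ q u) (u v : α) :
    p u * kern p q u v = omeg p q u v := by
  unfold kern
  by_cases hz : p u = 0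
  · rw [if_pos hz, hz, zero_mul]
    unfold omeg
    have hm : min (p u) (q u) = 0 := by
      rw [hz]; exact min_eq_left (hq0 u)
    rw [hm, hz]
    simp
  · rw [if_neg hz, mul_div_cancel₀ _ hz]

lemma sum_mul_kern {p q : α → ℝ} (hp0 : ∀ u, 0 ≤ p u) (hq0 : ∀ u, 0 ≤ q u)
    (hp1 : ∑ u, p u = 1) (hq1 : ∑ u, q u = 1) (v : α) :
    ∑ u, p u * kern p q u v = q v := by
  simp_rw [mul_kern hp0 hq0]
  exact omeg_col_sum hp1 hq1 v

lemma sum_min_eq {p q : α → ℝ} (hp1 : ∑ u, p u = 1) (hq1 : ∑ u, q u = 1) :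
    ∑ u, min (p u) (q u) = 1 - (1/2) * ∑ u, |p u - q u| := by
  have : ∀ u, min (p u) (q u) = (p u + q u - |p u - q u|) / 2 := by
    intro u
    rcases le_total (p u) (q u) with h | h
    · rw [min_eq_left h, abs_of_nonpos (by linarith)]; ring
    · rw [min_eq_right h, abs_of_nonneg (by linarith)]; ring
  simp_rw [this]
  rw [← Finset.sum_div, Finset.sum_sub_distrib, Finset.sum_add_distrib, hp1, hq1]
  ring

lemma sum_mul_kern_diag {p q : α → ℝ} (hp0 : ∀ u, 0 ≤ p u) (hq0 : ∀ u, 0 ≤ q u)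
    (hp1 : ∑ u, p u = 1) (hq1 : ∑ u, q u = 1) :
    1 - (1/2) * ∑ u, |p u - q u| ≤ ∑ u, p u * kern p q u u := by
  rw [← sum_min_eq hp1 hq1]
  apply Finset.sum_le_sum
  intro u _
  rw [mul_kern hp0 hq0]
  exact omeg_diag hp0 hq0 u

lemma kern_le_one {p q : α → ℝ} (hp0 : ∀ u, 0 ≤ p u) (hq0 : ∀ u, 0 ≤ q u)
    (hp1 : ∑ u, p u = 1) (hq1 : ∑ u, q u = 1) (u v : α) : kern p q u v ≤ 1 := by
  have h := kern_row_sum hp1 hq1 (q := q) u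
  have h2 : ∀ w ∈ (univ : Finset α), 0 ≤ kern p q u w := fun w _ => kern_nonneg hp0 hq0 u w
  calc kern p q u v ≤ ∑ w, kern p q u w := Finset.single_le_sum h2 (mem_univ v)
  _ = 1 := h

end Kernel

section Joint
variable {n : ℕ} {T : Fin n → Type*} [∀ i, Fintype (T i)] [∀ i, DecidableEq (T i)]

lemma sum_prod_pi_s12 (f : ∀ i, T i → ℝ) :
    ∑ s : (∀ j, T j), ∏ j, f j (s j) = ∏ j, ∑ x, f j x := (Fintype.prod_sum f).symm

lemma sum_prod_pi_ite (f : ∀ i, T i → ℝ) (i : Fin n) (v : T i) :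
    ∑ s : (∀ j, T j), (if s i = v then ∏ j, f j (s j) else 0)
      = (f i v) * ∏ j ∈ {i}ᶜ, ∑ x, f j x := by
  set g : ∀ j, T j → ℝ := Function.update f i (fun x => if x = v then f i x else 0) with hg
  have hpt : ∀ s : (∀ j, T j), ∏ j, g j (s j) = if s i = v then ∏ j, f j (s j) else 0 := by
    intro s
    have hco : ∏ j ∈ {i}ᶜ, g j (s j) = ∏ j ∈ {i}ᶜ, f j (s j) :=
      Finset.prod_congr rfl (fun j hj => by
        rw [hg, Function.update_of_ne (by simpa using hj)])
    by_cases hs : s i = v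
    · rw [Fintype.prod_eq_mul_prod_compl i (fun j => g j (s j)), hco, if_pos hs,
        Fintype.prod_eq_mul_prod_compl i (fun j => f j (s j))]
      congr 1
      rw [hg, Function.update_self, if_pos hs]
    · rw [if_neg hs, Fintype.prod_eq_mul_prod_compl i (fun j => g j (s j))]
      have hz : g i (s i) = 0 := by rw [hg, Function.update_self, if_neg hs]
      rw [hz, zero_mul]
  calc ∑ s : (∀ j, T j), (if s i = v then ∏ j, f j (s j) else 0)
      = ∑ s : (∀ j, T j), ∏ j, g j (s j) :=
        Finset.sum_congr rfl fun s _ => (hpt s).symm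
    _ = ∏ j, ∑ x, g j x := sum_prod_pi_s12 g
    _ = (∑ x, g i x) * ∏ j ∈ {i}ᶜ, ∑ x, g j x := Fintype.prod_eq_mul_prod_compl i _
    _ = (f i v) * ∏ j ∈ {i}ᶜ, ∑ x, f j x := by
        congr 1
        · rw [hg]
          simp only [Function.update_self]
          rw [Finset.sum_ite_eq' univ v (f i)]
          simp
        · exact Finset.prod_congr rfl fun j hj => Finset.sum_congr rfl fun x _ => by
            rw [hg, Function.update_of_ne (by simpa using hj)]

lemma regroup (D : (∀ i, T i) → ℝ) (M : ∀ i, T i → ℝ)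
    (hM : ∀ i v, (∑ t : (∀ j, T j), if t i = v then D t else 0) = M i v)
    (i : Fin n) (F : T i → ℝ) :
    ∑ t, D t * F (t i) = ∑ u, M i u * F u := by
  calc ∑ t, D t * F (t i)
      = ∑ t : (∀ j, T j), ∑ u, (if t i = u then D t else 0) * F u := by
        refine Finset.sum_congr rfl fun t _ => ?_
        simp_rw [ite_mul, zero_mul]
        rw [Finset.sum_ite_eq univ (t i) (fun u => D t * F u)]
        simp
    _ = ∑ u, (∑ t : (∀ j, T j), if t i = u then D t else 0) * F u := by
        rw [Finset.sum_comm]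
        exact Finset.sum_congr rfl fun u _ => (Finset.sum_mul _ _ _).symm
    _ = ∑ u, M i u * F u := by simp_rw [hM]

end Joint

lemma one_sub_sum_le_prod {ι : Type*} (s : Finset ι) (f : ι → ℝ)
    (h0 : ∀ i ∈ s, 0 ≤ f i) (h1 : ∀ i ∈ s, f i ≤ 1) :
    1 - ∑ i ∈ s, (1 - f i) ≤ ∏ i ∈ s, f i := by
  induction s using Finset.cons_induction with
  | empty => simp
  | cons a s ha ih =>
    rw [Finset.prod_cons, Finset.sum_cons]
    have ha0 : 0 ≤ f a := h0 a (Finset.mem_cons_self a s)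
    have ha1 : f a ≤ 1 := h1 a (Finset.mem_cons_self a s)
    have ih' := ih (fun i hi => h0 i (Finset.mem_cons.2 (Or.inr hi)))
      (fun i hi => h1 i (Finset.mem_cons.2 (Or.inr hi)))
    have hs0 : 0 ≤ ∑ i ∈ s, (1 - f i) :=
      Finset.sum_nonneg fun i hi => by linarith [h1 i (Finset.mem_cons.2 (Or.inr hi))]
    have e1 := mul_le_mul_of_nonneg_left ih' ha0
    have e2 : f a * ∑ i ∈ s, (1 - f i) ≤ ∑ i ∈ s, (1 - f i) :=
      mul_le_of_le_one_left hs0 ha1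
    nlinarith

/-- If `d_TV(Mᵢ, Mᵢ') ≤ ε` for all `i`, then every joint distribution with marginals
`(M₁,…,Mₙ)` is within TV distance `n·ε` of some joint distribution with marginals
`(M₁',…,Mₙ')`. -/
theorem exists_close_joint_with_marginals {n : ℕ} {T : Fin n → Type*}
    [∀ i, Fintype (T i)] [∀ i, DecidableEq (T i)]
    (M M' : ∀ i, T i → ℝ)
    (hM'0 : ∀ i v, 0 ≤ M' i v) (hM'1 : ∀ i, ∑ v, M' i v = 1)
    (ε : ℝ) (h : ∀ i, (1/2) * ∑ v, |M i v - M' i v| ≤ ε)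
    (D : (∀ i, T i) → ℝ) (hD : HasMarginals D M) :
    ∃ D' : (∀ i, T i) → ℝ, HasMarginals D' M' ∧
      (1/2) * ∑ t, |D t - D' t| ≤ n * ε := by
  obtain ⟨hD0, hD1, hDm⟩ := hD
  -- facts about M
  have hM0 : ∀ i v, 0 ≤ M i v := by
    intro i v
    rw [← hDm i v]
    exact Finset.sum_nonneg fun t _ => by split; exacts [hD0 t, le_refl 0]
  have hM1 : ∀ i, ∑ v, M i v = 1 := by
    intro i
    rw [← hD1]
    calc ∑ v, M i v = ∑ v, ∑ t : (∀ j, T j), if t i = v then D t else 0 := by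
          exact Finset.sum_congr rfl fun v _ => (hDm i v).symm
      _ = ∑ t : (∀ j, T j), ∑ v, if t i = v then D t else 0 := Finset.sum_comm
      _ = ∑ t, D t := by
          refine Finset.sum_congr rfl fun t _ => ?_
          rw [Finset.sum_ite_eq univ (t i) (fun _ => D t)]
          simp
  -- the kernels
  set K : ∀ i, T i → T i → ℝ := fun i => kern (M i) (M' i) with hK
  have K0 : ∀ i u v, 0 ≤ K i u v := fun i => kern_nonneg (hM0 i) (hM'0 i)
  have K1 : ∀ i u v, K i u v ≤ 1 := fun i => kern_le_one (hM0 i) (hM'0 i) (hM1 i) (hM'1 i)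
  have Krow : ∀ i u, ∑ v, K i u v = 1 := fun i => kern_row_sum (hM1 i) (hM'1 i)
  have Kcol : ∀ i v, ∑ u, M i u * K i u v = M' i v :=
    fun i => sum_mul_kern (hM0 i) (hM'0 i) (hM1 i) (hM'1 i)
  have Kdiag : ∀ i, 1 - ε ≤ ∑ u, M i u * K i u u := by
    intro i
    have := sum_mul_kern_diag (hM0 i) (hM'0 i) (hM1 i) (hM'1 i)
    have h2 := h i
    linarith
  -- the coupling
  set π : (∀ i, T i) → (∀ i, T i) → ℝ := fun t s => D t * ∏ j, K j (t j) (s j) with hπ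
  have π0 : ∀ t s, 0 ≤ π t s := fun t s =>
    mul_nonneg (hD0 t) (Finset.prod_nonneg fun j _ => K0 j (t j) (s j))
  have πrow : ∀ t, ∑ s, π t s = D t := by
    intro t
    rw [← Finset.mul_sum, sum_prod_pi_s12 (fun j => K j (t j))]
    simp_rw [Krow]
    simp
  set D' : (∀ i, T i) → ℝ := fun s => ∑ t, π t s with hD'
  refine ⟨D', ⟨fun s => Finset.sum_nonneg fun t _ => π0 t s, ?_, ?_⟩, ?_⟩
  · -- total mass 1
    rw [hD', Finset.sum_comm]
    simp_rw [πrow]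
    exact hD1
  · -- marginals
    intro i v
    calc ∑ s : (∀ j, T j), (if s i = v then D' s else 0)
        = ∑ s : (∀ j, T j), ∑ t : (∀ j, T j), (if s i = v then π t s else 0) := by
          refine Finset.sum_congr rfl fun s _ => ?_
          split
          · rfl
          · simp
      _ = ∑ t : (∀ j, T j), ∑ s : (∀ j, T j), (if s i = v then π t s else 0) := Finset.sum_comm
      _ = ∑ t : (∀ j, T j), D t * (K i (t i) v * ∏ j ∈ {i}ᶜ, ∑ x, K j (t j) x) := by
          refine Finset.sum_congr rfl fun t _ => ?_
          rw [← sum_prod_pi_ite (fun j => K j (t j)) i v, Finset.mul_sum]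
          refine Finset.sum_congr rfl fun s _ => ?_
          rw [hπ, mul_ite, mul_zero]
      _ = ∑ t : (∀ j, T j), D t * K i (t i) v := by
          refine Finset.sum_congr rfl fun t _ => ?_
          congr 1
          rw [Finset.prod_congr rfl (fun j _ => Krow j (t j))]
          simp
      _ = ∑ u, M i u * K i u v := regroup D M hDm i (fun u => K i u v)
      _ = M' i v := Kcol i v
  · -- TV bound
    have hdiag : 1 - n * ε ≤ ∑ t, π t t := by
      have step1 : ∀ t : (∀ j, T j),
          D t * (1 - ∑ j, (1 - K j (t j) (t j))) ≤ π t t := by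
        intro t
        refine mul_le_mul_of_nonneg_left ?_ (hD0 t)
        exact one_sub_sum_le_prod univ (fun j => K j (t j) (t j))
          (fun j _ => K0 j (t j) (t j)) (fun j _ => K1 j (t j) (t j))
      have step2 : ∀ j : Fin n, ∑ t, D t * (1 - K j (t j) (t j)) ≤ ε := by
        intro j
        rw [regroup D M hDm j (fun u => 1 - K j u u)]
        have e : ∑ u, M j u * (1 - K j u u) = 1 - ∑ u, M j u * K j u u := by
          simp_rw [mul_sub, mul_one]
          rw [Finset.sum_sub_distrib, hM1 j]
        rw [e]
        linarith [Kdiag j]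
      calc 1 - (n:ℝ) * ε ≤ ∑ t, D t * (1 - ∑ j, (1 - K j (t j) (t j))) := by
            have e1 : ∀ t : (∀ j, T j), D t * (1 - ∑ j, (1 - K j (t j) (t j)))
                = D t - ∑ j, D t * (1 - K j (t j) (t j)) := by
              intro t; rw [mul_sub, mul_one, Finset.mul_sum]
            have e : ∑ t, D t * (1 - ∑ j, (1 - K j (t j) (t j)))
                = 1 - ∑ j, ∑ t, D t * (1 - K j (t j) (t j)) := by
              calc ∑ t, D t * (1 - ∑ j, (1 - K j (t j) (t j)))
                  = ∑ t : (∀ j, T j), (D t - ∑ j, D t * (1 - K j (t j) (t j))) :=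
                    Finset.sum_congr rfl fun t _ => e1 t
                _ = 1 - ∑ t : (∀ j, T j), ∑ j, D t * (1 - K j (t j) (t j)) := by
                    rw [Finset.sum_sub_distrib, hD1]
                _ = 1 - ∑ j, ∑ t, D t * (1 - K j (t j) (t j)) := by
                    rw [Finset.sum_comm]
            rw [e]
            have : ∑ j : Fin n, ∑ t, D t * (1 - K j (t j) (t j)) ≤ ∑ j : Fin n, ε :=
              Finset.sum_le_sum fun j _ => step2 j
            simp only [Finset.sum_const, card_univ, Fintype.card_fin, nsmul_eq_mul] at this
            linarith
        _ ≤ ∑ t, π t t := Finset.sum_le_sum fun t _ => step1 t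
    have hA : ∀ t, ∑ s ∈ {t}ᶜ, π t s = D t - π t t := by
      intro t
      have := Fintype.sum_eq_add_sum_compl t (fun s => π t s)
      rw [πrow t] at this
      linarith
    have key : ∀ t, |D t - D' t| ≤ (∑ s ∈ {t}ᶜ, π t s) + (∑ s ∈ {t}ᶜ, π s t) := by
      intro t
      have hBval : D' t = π t t + ∑ s ∈ {t}ᶜ, π s t :=
        Fintype.sum_eq_add_sum_compl t (fun s => π s t)
      have hAval := hA t
      have hA0 : 0 ≤ ∑ s ∈ {t}ᶜ, π t s := Finset.sum_nonneg fun s _ => π0 t s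
      have hB0 : 0 ≤ ∑ s ∈ {t}ᶜ, π s t := Finset.sum_nonneg fun s _ => π0 s t
      rw [abs_le]
      constructor <;> [linarith; linarith]
    have hswap : ∑ t, ∑ s ∈ {t}ᶜ, π s t = ∑ t, ∑ s ∈ {t}ᶜ, π t s := by
      refine Finset.sum_comm' ?_
      intro x y
      simp [ne_comm]
    have hsum : ∑ t, |D t - D' t| ≤ 2 * (1 - ∑ t, π t t) := by
      calc ∑ t, |D t - D' t|
          ≤ ∑ t, ((∑ s ∈ {t}ᶜ, π t s) + (∑ s ∈ {t}ᶜ, π s t)) :=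
            Finset.sum_le_sum fun t _ => key t
        _ = 2 * ∑ t, ∑ s ∈ {t}ᶜ, π t s := by
            rw [Finset.sum_add_distrib, hswap]; ring
        _ = 2 * (1 - ∑ t, π t t) := by
            congr 1
            simp_rw [hA]
            rw [Finset.sum_sub_distrib, hD1]
    linarith
end

section
/- Robustness of worst-case expected objective over consistent joints: Let F : T → [a,b] be any bounded function on T = T₁ × ⋯ × Tₙ (finite). Let Π(D₁,…,Dₙ) denote the set of joint distributions with marginals D₁,…,Dₙ. If d_TV(Dᵢ, Dᵢ') ≤ ε for all i ∈ [n], then min_{D ∈ Π(D₁,…,Dₙ)} 𝔼_{t∼D}[F(t)] ≥ min_{D' ∈ Π(D₁',…,Dₙ')} 𝔼_{t'∼D'}[F(t')] − n·ε·(b−a). -/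
open Finset

lemma sum_pi_prod {n : ℕ} {T : Fin n → Type*} [∀ i, Fintype (T i)]
    (g : ∀ i, T i → ℝ) :
    (∑ t : ∀ j, T j, ∏ j, g j (t j)) = ∏ j, ∑ w, g j w :=
  (Fintype.prod_sum g).symm

lemma sum_pi_ite {n : ℕ} {T : Fin n → Type*} [∀ i, Fintype (T i)]
    [∀ i, DecidableEq (T i)] (g : ∀ i, T i → ℝ) (i : Fin n) (v : T i) :
    (∑ t : ∀ j, T j, if t i = v then ∏ j, g j (t j) else 0)
      = g i v * ∏ j ∈ univ.erase i, ∑ w, g j w := by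
  classical
  set f : ∀ j, T j → ℝ := Function.update g i (fun w => if w = v then g i w else 0) with hf
  have hfi : f i = fun w => if w = v then g i w else 0 := Function.update_self _ _ _
  have hfj : ∀ j, j ≠ i → f j = g j := fun j hj => Function.update_of_ne hj _ _
  have key : ∀ t : ∀ j, T j, (if t i = v then ∏ j, g j (t j) else 0) = ∏ j, f j (t j) := by
    intro t
    rw [← Finset.mul_prod_erase univ (fun j => f j (t j)) (mem_univ i),
        ← Finset.mul_prod_erase univ (fun j => g j (t j)) (mem_univ i)] at *
    have : ∏ j ∈ univ.erase i, f j (t j) = ∏ j ∈ univ.erase i, g j (t j) := by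
      refine Finset.prod_congr rfl fun j hj => ?_
      rw [hfj j (Finset.ne_of_mem_erase hj)]
    rw [this, hfi]
    by_cases hv : t i = v <;> simp [hv]
  rw [Finset.sum_congr rfl fun t _ => key t, sum_pi_prod,
      ← Finset.mul_prod_erase univ _ (mem_univ i)]
  congr 1
  · rw [hfi]; simp
  · refine Finset.prod_congr rfl fun j hj => ?_
    rw [hfj j (Finset.ne_of_mem_erase hj)]

/-- Group a sum over the pi type by the value of coordinate `i`. -/
lemma group_marg {n : ℕ} {T : Fin n → Type*} [∀ i, Fintype (T i)]
    [∀ i, DecidableEq (T i)] (D : (∀ i, T i) → ℝ) (N : ∀ i, T i → ℝ)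
    (hDm : ∀ i v, (∑ t : (∀ j, T j), if t i = v then D t else 0) = N i v)
    (i : Fin n) (G : T i → ℝ) :
    (∑ t : ∀ j, T j, D t * G (t i)) = ∑ u, N i u * G u := by
  have e : ∀ t : ∀ j, T j, D t * G (t i) = ∑ u, (if t i = u then D t else 0) * G u := by
    intro t
    simp only [ite_mul, zero_mul]
    rw [Finset.sum_ite_eq univ (t i) (fun u => D t * G u)]
    simp
  rw [Finset.sum_congr rfl fun t _ => e t, Finset.sum_comm]
  refine Finset.sum_congr rfl fun u _ => ?_
  rw [← Finset.sum_mul, hDm i u]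


lemma coupling_exists {α : Type*} [Fintype α] [DecidableEq α] (p p' : α → ℝ)
    (hp0 : ∀ u, 0 ≤ p u) (hp1 : ∑ u, p u = 1)
    (hp'0 : ∀ u, 0 ≤ p' u) (hp'1 : ∑ u, p' u = 1) :
    ∃ q : α → α → ℝ, (∀ u v, 0 ≤ q u v) ∧ (∀ u, ∑ v, q u v = 1) ∧
      (∀ v, ∑ u, p u * q u v = p' v) ∧
      ∑ u, p u * (1 - q u u) ≤ (1/2) * ∑ u, |p u - p' u| := by
  classical
  set m : α → ℝ := fun u => min (p u) (p' u) with hm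
  set d : ℝ := ∑ u, (p u - m u) with hd
  have hm0 : ∀ u, 0 ≤ m u := fun u => le_min (hp0 u) (hp'0 u)
  have hmp : ∀ u, m u ≤ p u := fun u => min_le_left _ _
  have hmp' : ∀ u, m u ≤ p' u := fun u => min_le_right _ _
  have hd0 : 0 ≤ d := Finset.sum_nonneg fun u _ => sub_nonneg.2 (hmp u)
  have hd2 : ∑ u, (p' u - m u) = d := by
    rw [hd, Finset.sum_sub_distrib, Finset.sum_sub_distrib, hp1, hp'1]
  have habs : (1/2) * ∑ u, |p u - p' u| = d := by
    have : ∀ u, |p u - p' u| = (p u - m u) + (p' u - m u) := by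
      intro u
      rcases le_total (p u) (p' u) with hle | hle
      · have hmu : m u = p u := min_eq_left hle
        rw [abs_of_nonpos (by linarith), hmu]; ring
      · have hmu : m u = p' u := min_eq_right hle
        rw [abs_of_nonneg (by linarith), hmu]; ring
    rw [Finset.sum_congr rfl fun u _ => this u, Finset.sum_add_distrib, hd2, ← hd]
    ring
  by_cases hdz : d = 0
  · -- p = p'
    have hpm : ∀ u, p u - m u = 0 := by
      intro u
      have := (Finset.sum_eq_zero_iff_of_nonneg
        (fun u _ => sub_nonneg.2 (hmp u))).1 (hd ▸ hdz) u (mem_univ u)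
      exact this
    refine ⟨fun u v => if u = v then 1 else 0, ?_, ?_, ?_, ?_⟩
    · intro u v; dsimp only; split <;> norm_num
    · intro u; simp
    · intro v
      have : ∀ u, p u * (if u = v then (1:ℝ) else 0) = if u = v then p u else 0 := by
        intro u; split <;> simp
      rw [Finset.sum_congr rfl fun u _ => this u, Finset.sum_ite_eq' univ v p]
      have h1 := hpm v
      have h2 : p' v - m v = 0 := by
        have := (Finset.sum_eq_zero_iff_of_nonneg
          (fun u _ => sub_nonneg.2 (hmp' u))).1 (hd2.trans hdz) v (mem_univ v)
        exact this
      simp only [mem_univ, if_true]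
      linarith
    · rw [habs, hdz]; simp
  · have hdpos : 0 < d := lt_of_le_of_ne hd0 (Ne.symm hdz)
    set c : α → α → ℝ := fun u v =>
      (if u = v then m u else 0) + (p u - m u) * (p' v - m v) / d with hc
    have hc0 : ∀ u v, 0 ≤ c u v := by
      intro u v
      have h1 : 0 ≤ (p u - m u) * (p' v - m v) / d :=
        div_nonneg (mul_nonneg (by linarith [hmp u]) (by linarith [hmp' v])) hd0
      rw [hc]; dsimp only; split
      · linarith [hm0 u]
      · linarith
    have hcrow : ∀ u, ∑ v, c u v = p u := by
      intro u
      rw [hc]; dsimp only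
      rw [Finset.sum_add_distrib, Finset.sum_ite_eq univ u (fun _ => m u)]
      have : ∑ v, (p u - m u) * (p' v - m v) / d
          = (p u - m u) / d * ∑ v, (p' v - m v) := by
        rw [Finset.mul_sum]; congr 1; ext v; ring
      rw [this, hd2]
      field_simp
      simp only [Finset.mem_univ, if_true]; ring
    have hccol : ∀ v, ∑ u, c u v = p' v := by
      intro v
      rw [hc]; dsimp only
      rw [Finset.sum_add_distrib, Finset.sum_ite_eq' univ v m]
      have : ∑ u, (p u - m u) * (p' v - m v) / d
          = (p' v - m v) / d * ∑ u, (p u - m u) := by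
        rw [Finset.mul_sum]; congr 1; ext u; ring
      rw [this, ← hd]
      field_simp
      simp only [Finset.mem_univ, if_true]; ring
    have hczero : ∀ u v, p u = 0 → c u v = 0 := by
      intro u v hu
      have hmu : m u = 0 := le_antisymm (hu ▸ hmp u) (hm0 u)
      rw [hc]; dsimp only
      rw [hu, hmu]; simp
    set q : α → α → ℝ := fun u v =>
      if p u = 0 then (if u = v then 1 else 0) else c u v / p u with hq
    have hpq : ∀ u v, p u * q u v = c u v := by
      intro u v
      rw [hq]; dsimp only
      split
      · rename_i hu; rw [hu, hczero u v hu]; ring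
      · rename_i hu; field_simp
    refine ⟨q, ?_, ?_, ?_, ?_⟩
    · intro u v; rw [hq]; dsimp only; split
      · split <;> norm_num
      · rename_i hu
        exact div_nonneg (hc0 u v) (hp0 u)
    · intro u; rw [hq]; dsimp only; split
      · simp
      · rename_i hu
        rw [← Finset.sum_div, hcrow u, div_self hu]
    · intro v
      rw [Finset.sum_congr rfl fun u _ => hpq u v, hccol v]
    · have : ∑ u, p u * (1 - q u u) = 1 - ∑ u, c u u := by
        have e : ∀ u, p u * (1 - q u u) = p u - c u u := by
          intro u; rw [mul_sub, hpq u u, mul_one]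
        rw [Finset.sum_congr rfl fun u _ => e u, Finset.sum_sub_distrib, hp1]
      rw [this, habs]
      have : ∑ u, m u ≤ ∑ u, c u u := by
        refine Finset.sum_le_sum fun u _ => ?_
        have hcu : c u u = m u + (p u - m u) * (p' u - m u) / d := by
          rw [hc]; dsimp only; rw [if_pos rfl]
        have : 0 ≤ (p u - m u) * (p' u - m u) / d :=
          div_nonneg (mul_nonneg (by linarith [hmp u]) (by linarith [hmp' u])) hd0
        rw [hcu]; linarith
      have hdm : d = 1 - ∑ u, m u := by
        rw [hd, Finset.sum_sub_distrib, hp1]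
      linarith

/-- Robustness of the worst-case expected objective over joints consistent with given
marginals: if each marginal moves by at most `ε` in TV distance, the min expected value
of a `[a,b]`-valued function over consistent joints moves by at most `n·ε·(b−a)`. -/
theorem min_over_joints_robust {n : ℕ} {T : Fin n → Type*}
    [∀ i, Fintype (T i)] [∀ i, DecidableEq (T i)]
    (M M' : ∀ i, T i → ℝ)
    (hM0 : ∀ i v, 0 ≤ M i v) (hM1 : ∀ i, ∑ v, M i v = 1)
    (hM'0 : ∀ i v, 0 ≤ M' i v) (hM'1 : ∀ i, ∑ v, M' i v = 1)
    (ε : ℝ) (h : ∀ i, (1/2) * ∑ v, |M i v - M' i v| ≤ ε)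
    (F : (∀ i, T i) → ℝ) (a b : ℝ) (hF : ∀ t, a ≤ F t ∧ F t ≤ b) :
    sInf {E : ℝ | ∃ D : (∀ i, T i) → ℝ, HasMarginals D M' ∧ E = ∑ t, D t * F t}
        - n * ε * (b - a)
      ≤ sInf {E : ℝ | ∃ D : (∀ i, T i) → ℝ, HasMarginals D M ∧ E = ∑ t, D t * F t} := by
  classical
  have hTne : ∀ i, Nonempty (T i) := by
    intro i
    rcases isEmpty_or_nonempty (T i) with he | hne
    · exfalso
      have := hM1 i
      rw [Finset.univ_eq_empty] at this
      simp at this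
    · exact hne
  have hne' : Nonempty (∀ i, T i) := ⟨fun i => (hTne i).some⟩
  obtain ⟨t0⟩ := hne'
  have hab : a ≤ b := le_trans (hF t0).1 (hF t0).2
  have hq := fun i => coupling_exists (M i) (M' i) (hM0 i) (hM1 i) (hM'0 i) (hM'1 i)
  choose q hq0 hq1 hq2 hq3 using hq
  set S : Set ℝ := {E : ℝ | ∃ D : (∀ i, T i) → ℝ, HasMarginals D M ∧ E = ∑ t, D t * F t}
    with hSdef
  set S' : Set ℝ := {E : ℝ | ∃ D : (∀ i, T i) → ℝ, HasMarginals D M' ∧ E = ∑ t, D t * F t}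
    with hS'def
  have hbdd' : BddBelow S' := by
    refine ⟨a, fun E hE => ?_⟩
    obtain ⟨D, ⟨hD0, hD1, _⟩, rfl⟩ := hE
    calc a = ∑ t, D t * a := by rw [← Finset.sum_mul, hD1, one_mul]
    _ ≤ ∑ t, D t * F t := Finset.sum_le_sum fun t _ =>
        mul_le_mul_of_nonneg_left (hF t).1 (hD0 t)
  have hne : S.Nonempty := by
    refine ⟨∑ t : ∀ j, T j, (∏ i, M i (t i)) * F t,
      fun t => ∏ i, M i (t i), ⟨?_, ?_, ?_⟩, rfl⟩
    · intro t; exact Finset.prod_nonneg fun i _ => hM0 i (t i)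
    · rw [sum_pi_prod (fun j => M j)]
      exact Finset.prod_eq_one fun i _ => hM1 i
    · intro i v
      rw [sum_pi_ite (fun j => M j) i v,
          Finset.prod_eq_one fun j _ => hM1 j, mul_one]
  refine le_csInf hne fun E hE => ?_
  obtain ⟨D, ⟨hD0, hD1, hDm⟩, rfl⟩ := hE
  rw [sub_le_iff_le_add]
  set D' : (∀ i, T i) → ℝ := fun t' => ∑ t : ∀ j, T j, D t * ∏ j, q j (t j) (t' j)
    with hD'def
  have hone : ∀ t : ∀ j, T j, (∑ t' : ∀ j, T j, ∏ j, q j (t j) (t' j)) = 1 := by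
    intro t
    rw [sum_pi_prod (fun j => q j (t j))]
    exact Finset.prod_eq_one fun j _ => hq1 j (t j)
  have hD'M : HasMarginals D' M' := by
    refine ⟨?_, ?_, ?_⟩
    · intro t'
      exact Finset.sum_nonneg fun t _ => mul_nonneg (hD0 t)
        (Finset.prod_nonneg fun j _ => hq0 j (t j) (t' j))
    · calc ∑ t', D' t'
          = ∑ t : ∀ j, T j, ∑ t' : ∀ j, T j, D t * ∏ j, q j (t j) (t' j) :=
            Finset.sum_comm
      _ = ∑ t, D t := by
          refine Finset.sum_congr rfl fun t _ => ?_
          rw [← Finset.mul_sum, hone t, mul_one]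
      _ = 1 := hD1
    · intro i v
      have step1 : ∀ t' : ∀ j, T j, (if t' i = v then D' t' else 0)
          = ∑ t : ∀ j, T j, (if t' i = v then D t * ∏ j, q j (t j) (t' j) else 0) := by
        intro t'
        split
        · rfl
        · simp
      calc ∑ t' : ∀ j, T j, (if t' i = v then D' t' else 0)
          = ∑ t : ∀ j, T j, ∑ t' : ∀ j, T j,
              (if t' i = v then D t * ∏ j, q j (t j) (t' j) else 0) := by
            rw [Finset.sum_congr rfl fun t' _ => step1 t']
            exact Finset.sum_comm
        _ = ∑ t : ∀ j, T j, D t * q i (t i) v := by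
            refine Finset.sum_congr rfl fun t _ => ?_
            have e : ∀ t' : ∀ j, T j, (if t' i = v then D t * ∏ j, q j (t j) (t' j) else 0)
                = D t * (if t' i = v then ∏ j, q j (t j) (t' j) else 0) := by
              intro t'; split <;> simp
            rw [Finset.sum_congr rfl fun t' _ => e t', ← Finset.mul_sum,
                sum_pi_ite (fun j => q j (t j)) i v,
                Finset.prod_eq_one (fun j _ => hq1 j (t j)), mul_one]
        _ = ∑ u, M i u * q i u v := group_marg D M hDm i (fun u => q i u v)
        _ = M' i v := hq2 i v
  have hmem : (∑ t', D' t' * F t') ∈ S' := ⟨D', hD'M, rfl⟩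
  have h1 : sInf S' ≤ ∑ t', D' t' * F t' := csInf_le hbdd' hmem
  -- the expectation of F under D' exceeds that under D by at most n ε (b-a)
  have key : ∑ t', D' t' * F t' ≤ (∑ t, D t * F t) + n * ε * (b - a) := by
    have lhs_eq : ∑ t', D' t' * F t'
        = ∑ t : ∀ j, T j, ∑ t' : ∀ j, T j, (D t * ∏ j, q j (t j) (t' j)) * F t' := by
      rw [Finset.sum_comm]
      refine Finset.sum_congr rfl fun t' _ => ?_
      rw [hD'def, Finset.sum_mul]
    have rhs_eq : ∑ t, D t * F t
        = ∑ t : ∀ j, T j, ∑ t' : ∀ j, T j, (D t * ∏ j, q j (t j) (t' j)) * F t := by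
      refine Finset.sum_congr rfl fun t _ => ?_
      have : ∑ t' : ∀ j, T j, (D t * ∏ j, q j (t j) (t' j)) * F t
          = (∑ t' : ∀ j, T j, ∏ j, q j (t j) (t' j)) * (D t * F t) := by
        rw [Finset.sum_mul]
        exact Finset.sum_congr rfl fun t' _ => by ring
      rw [this, hone t, one_mul]
    rw [lhs_eq, rhs_eq, ← sub_le_iff_le_add', ← Finset.sum_sub_distrib]
    have diff_eq : ∀ t : ∀ j, T j,
        (∑ t' : ∀ j, T j, (D t * ∏ j, q j (t j) (t' j)) * F t')
          - (∑ t' : ∀ j, T j, (D t * ∏ j, q j (t j) (t' j)) * F t)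
        = ∑ t' : ∀ j, T j, (D t * ∏ j, q j (t j) (t' j)) * (F t' - F t) := by
      intro t
      rw [← Finset.sum_sub_distrib]
      refine Finset.sum_congr rfl fun t' _ => ?_
      ring
    rw [Finset.sum_congr rfl fun t _ => diff_eq t]
    -- pointwise bound
    have hpt : ∀ t t' : ∀ j, T j,
        (D t * ∏ j, q j (t j) (t' j)) * (F t' - F t)
          ≤ (D t * ∏ j, q j (t j) (t' j)) *
            ((b - a) * ∑ i, (if t i = t' i then (0:ℝ) else 1)) := by
      intro t t'
      have hK : 0 ≤ D t * ∏ j, q j (t j) (t' j) :=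
        mul_nonneg (hD0 t) (Finset.prod_nonneg fun j _ => hq0 j (t j) (t' j))
      refine mul_le_mul_of_nonneg_left ?_ hK
      by_cases htt : t = t'
      · subst htt
        simp
      · obtain ⟨i, hi⟩ := Function.ne_iff.1 htt
        have hc1 : (1:ℝ) ≤ ∑ i, (if t i = t' i then (0:ℝ) else 1) := by
          have h0 : ∀ k ∈ (univ : Finset (Fin n)), (0:ℝ) ≤ if t k = t' k then (0:ℝ) else 1 := by
            intro k _; split <;> norm_num
          have := Finset.single_le_sum h0 (mem_univ i)
          simpa [if_neg hi] using this
        have h2 : F t' - F t ≤ b - a := by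
          have := (hF t').2; have := (hF t).1; linarith
        calc F t' - F t ≤ b - a := h2
          _ ≤ (b - a) * ∑ i, (if t i = t' i then (0:ℝ) else 1) :=
            le_mul_of_one_le_right (by linarith) hc1
    calc ∑ t : ∀ j, T j, ∑ t' : ∀ j, T j,
            (D t * ∏ j, q j (t j) (t' j)) * (F t' - F t)
        ≤ ∑ t : ∀ j, T j, ∑ t' : ∀ j, T j,
            (D t * ∏ j, q j (t j) (t' j)) *
              ((b - a) * ∑ i, (if t i = t' i then (0:ℝ) else 1)) :=
          Finset.sum_le_sum fun t _ => Finset.sum_le_sum fun t' _ => hpt t t'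
      _ = (b - a) * ∑ i, ∑ t : ∀ j, T j, ∑ t' : ∀ j, T j,
            (D t * ∏ j, q j (t j) (t' j)) * (if t i = t' i then (0:ℝ) else 1) := by
          calc ∑ t : ∀ j, T j, ∑ t' : ∀ j, T j,
                  (D t * ∏ j, q j (t j) (t' j)) *
                    ((b - a) * ∑ i, (if t i = t' i then (0:ℝ) else 1))
              = ∑ t : ∀ j, T j, ∑ t' : ∀ j, T j, ∑ i,
                  (b - a) * ((D t * ∏ j, q j (t j) (t' j)) *
                    (if t i = t' i then (0:ℝ) else 1)) := by
                refine Finset.sum_congr rfl fun t _ => Finset.sum_congr rfl fun t' _ => ?_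
                rw [Finset.mul_sum, Finset.mul_sum]
                exact Finset.sum_congr rfl fun i _ => by ring
            _ = ∑ i, ∑ t : ∀ j, T j, ∑ t' : ∀ j, T j,
                  (b - a) * ((D t * ∏ j, q j (t j) (t' j)) *
                    (if t i = t' i then (0:ℝ) else 1)) := by
                rw [Finset.sum_congr rfl fun t _ => Finset.sum_comm, Finset.sum_comm]
            _ = (b - a) * ∑ i, ∑ t : ∀ j, T j, ∑ t' : ∀ j, T j,
                  (D t * ∏ j, q j (t j) (t' j)) * (if t i = t' i then (0:ℝ) else 1) := by
                rw [Finset.mul_sum]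
                refine Finset.sum_congr rfl fun i _ => ?_
                rw [Finset.mul_sum]
                exact Finset.sum_congr rfl fun t _ => (Finset.mul_sum _ _ _).symm
      _ ≤ n * ε * (b - a) := by
          have hAi : ∀ i, (∑ t : ∀ j, T j, ∑ t' : ∀ j, T j,
              (D t * ∏ j, q j (t j) (t' j)) * (if t i = t' i then (0:ℝ) else 1)) ≤ ε := by
            intro i
            have inner : ∀ t : ∀ j, T j,
                (∑ t' : ∀ j, T j, (∏ j, q j (t j) (t' j)) * (if t i = t' i then (0:ℝ) else 1))
                  = 1 - q i (t i) (t i) := by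
              intro t
              have e : ∀ t' : ∀ j, T j,
                  (∏ j, q j (t j) (t' j)) * (if t i = t' i then (0:ℝ) else 1)
                    = (∏ j, q j (t j) (t' j))
                      - (if t' i = t i then ∏ j, q j (t j) (t' j) else 0) := by
                intro t'
                by_cases hh : t' i = t i
                · rw [if_pos hh.symm, if_pos hh]; ring
                · rw [if_neg (fun hc => hh hc.symm), if_neg hh]; ring
              rw [Finset.sum_congr rfl fun t' _ => e t', Finset.sum_sub_distrib, hone t,
                  sum_pi_ite (fun j => q j (t j)) i (t i),
                  Finset.prod_eq_one (fun j _ => hq1 j (t j)), mul_one]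
            have step : (∑ t : ∀ j, T j, ∑ t' : ∀ j, T j,
                (D t * ∏ j, q j (t j) (t' j)) * (if t i = t' i then (0:ℝ) else 1))
                  = ∑ t : ∀ j, T j, D t * (1 - q i (t i) (t i)) := by
              refine Finset.sum_congr rfl fun t _ => ?_
              rw [← inner t, Finset.mul_sum]
              exact Finset.sum_congr rfl fun t' _ => by ring
            rw [step, group_marg D M hDm i (fun u => 1 - q i u u)]
            exact le_trans (hq3 i) (h i)
          have hsum : (∑ i : Fin n, (ε:ℝ)) = n * ε := by
            simp [Finset.sum_const, Finset.card_univ, nsmul_eq_mul]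
          calc (b - a) * ∑ i, ∑ t : ∀ j, T j, ∑ t' : ∀ j, T j,
                  (D t * ∏ j, q j (t j) (t' j)) * (if t i = t' i then (0:ℝ) else 1)
              ≤ (b - a) * ∑ _i : Fin n, ε :=
                mul_le_mul_of_nonneg_left (Finset.sum_le_sum fun i _ => hAi i)
                  (by linarith)
            _ = n * ε * (b - a) := by rw [hsum]; ring
  linarith
end

section
/- MRF near-independence bound (Cai–Oikonomou Lemma 2 consequence): let D be a probability distribution on a finite product space T = T₁ × ⋯ × Tₘ such that for all i, all events E ⊆ Tᵢ and E' ⊆ T₋ᵢ, exp(−4Δ) ≤ Pr_{t∼D}[tᵢ ∈ E ∧ t₋ᵢ ∈ E'] / (Pr_{tᵢ∼Dᵢ}[tᵢ ∈ E] · Pr_{t₋ᵢ∼D₋ᵢ}[t₋ᵢ ∈ E']) ≤ exp(4Δ) (whenever the denominator is positive). Then for the two-point example with m = 2 and D given by D(A,A) = 1 − 2k + k³, D(A,B) = D(B,A) = k − k³, D(B,B) = k³ for 0 < k < 1/2, the constraint forces Δ ≥ (1/4)·log(1/k), while d_TV(D, D₁ × D₂) = 2(k² − k³) ≤ 2k².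 -/
open Finset

/-- The two-point correlated distribution on `{A,B}²` (with `A = false`, `B = true`):
`D(A,A) = 1 − 2k + k³`, `D(A,B) = D(B,A) = k − k³`, `D(B,B) = k³`. -/
def Dk (k : ℝ) : Bool × Bool → ℝ :=
  fun p =>
    match p with
    | (false, false) => 1 - 2*k + k^3
    | (false, true) => k - k^3
    | (true, false) => k - k^3
    | (true, true) => k^3

/-- The common marginal of `Dk k`: `B` has probability `k`, `A` has probability `1 − k`. -/
def DkMarg (k : ℝ) : Bool → ℝ := fun b => if b then k else 1 - k

/-- MRF near-independence gap example: if `Dk k` satisfies the Cai–Oikonomou MRF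
multiplicative bound with parameter `Δ` (for all events `E`, `E'` on the two coordinates
with positive product of marginal probabilities), then `Δ ≥ (1/4)·log(1/k)`, while the TV
distance of `Dk k` to the product of its marginals equals `2(k² − k³) ≤ 2k²`. -/
theorem mrf_gap_example (k Δ : ℝ) (hk0 : 0 < k) (hk1 : k < 1/2)
    (hMRF : ∀ E E' : Finset Bool,
      0 < (∑ x ∈ E, DkMarg k x) * (∑ y ∈ E', DkMarg k y) →
        Real.exp (-(4*Δ)) ≤
            (∑ p ∈ E ×ˢ E', Dk k p) / ((∑ x ∈ E, DkMarg k x) * (∑ y ∈ E', DkMarg k y)) ∧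
          (∑ p ∈ E ×ˢ E', Dk k p) / ((∑ x ∈ E, DkMarg k x) * (∑ y ∈ E', DkMarg k y))
            ≤ Real.exp (4*Δ)) :
    (1/4) * Real.log (1/k) ≤ Δ ∧
      (1/2) * ∑ p : Bool × Bool, |Dk k p - DkMarg k p.1 * DkMarg k p.2|
        = 2 * (k^2 - k^3) ∧
      2 * (k^2 - k^3) ≤ 2 * k^2 := by
  have habs : k^2 - k^3 = |k^2 - k^3| := by
    rw [abs_of_nonneg]
    nlinarith
  refine ⟨?_, ?_, by nlinarith⟩
  · have h := (hMRF {true} {true} (by simp [DkMarg]; positivity)).1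
    simp [Dk, DkMarg] at h
    have h2 : Real.exp (-(4*Δ)) ≤ k := by
      have : k^3 / (k*k) = k := by field_simp
      linarith [h, this ▸ h]
    have h3 : -(4*Δ) ≤ Real.log k := by
      rw [← Real.log_exp (-(4*Δ))]
      exact Real.log_le_log (Real.exp_pos _) h2
    rw [Real.log_div one_ne_zero (ne_of_gt hk0), Real.log_one]
    linarith
  · rw [Fintype.sum_prod_type]
    simp only [Fintype.sum_bool]
    simp only [Dk, DkMarg]
    norm_num
    rw [show (1:ℝ) - 2*k + k^3 - (1-k)*(1-k) = -(k^2 - k^3) by ring,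
        show k - k^3 - (1-k)*k = k^2 - k^3 by ring,
        show k - k^3 - k*(1-k) = k^2 - k^3 by ring,
        show k^3 - k*k = -(k^2 - k^3) by ring, abs_neg, ← habs]
    ring
end
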